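/- arXiv:2503.22770 — 2 statements merged into one kernel-verified Lean document; each statement's English description precedes it below -/
import Mathlib

section
/- Let a be an elliptic function that is not constant on the complement of its poles, and suppose a has at least one pole. Let N ≥ 0 be an integer such that there exists p₀ ∈ ℂ with both p₀ and p₀ + N·s poles of a, while for every integer m > N there is no point p with both p and p + m·s poles of a. Define f(z) = a(z + s) − a(z). Then there exists p ∈ ℂ such that both p and p + (N+1)·s are poles of f, and for every integer m > N + 1 there is no point p' with both p' and p' + m·s poles of f; that is, the polar dispersion of f equals N + 1. -/
open Complex

noncomputable section

/-- The lattice generated by two complex numbers. -/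
def latticeGen (l1 l2 : ℂ) : Set ℂ := {z : ℂ | ∃ m n : ℤ, z = (m : ℂ) * l1 + (n : ℂ) * l2}

/-- `f` is elliptic with respect to `Λ`: meromorphic on all of `ℂ` and `Λ`-periodic at
every point of analyticity. -/
def IsElliptic (Λ : Set ℂ) (f : ℂ → ℂ) : Prop :=
  (∀ z : ℂ, MeromorphicAt f z) ∧
    ∀ lam ∈ Λ, ∀ z : ℂ, AnalyticAt ℂ f z → f (z + lam) = f z

/-- The Weierstrass zeta function of the lattice `Λ`. -/
def wzeta (Λ : Set ℂ) (z : ℂ) : ℂ :=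
  1 / z + ∑' l : {l : ℂ // l ∈ Λ ∧ l ≠ 0},
    (1 / (z - (l : ℂ)) + 1 / (l : ℂ) + z / (l : ℂ) ^ 2)

/-- The coefficient of `(z - α)⁻ʲ` in the Laurent expansion of `f` at `α`, computed as the
limit, as `ε → 0⁺`, of `(2πi)⁻¹ ∮_{|z-α|=ε} f(z) (z-α)^(j-1) dz`. -/
def laurentCoeff (f : ℂ → ℂ) (α : ℂ) (j : ℕ) : ℂ :=
  Filter.limUnder (nhdsWithin (0 : ℝ) (Set.Ioi 0)) fun ε : ℝ =>
    (2 * (Real.pi : ℂ) * Complex.I)⁻¹ * ∮ z in C(α, ε), f z * (z - α) ^ (j - 1)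

/-- `p` is a pole of `f`: `f` is meromorphic at `p` with nonzero principal part. -/
def IsPole (f : ℂ → ℂ) (p : ℂ) : Prop :=
  MeromorphicAt f p ∧ ∃ j : ℕ, 1 ≤ j ∧ laurentCoeff f p j ≠ 0

/-- `f` is summable with respect to the shift by `s`. -/
def IsSummableE (Λ : Set ℂ) (s : ℂ) (f : ℂ → ℂ) : Prop :=
  ∃ g : ℂ → ℂ, IsElliptic Λ g ∧
    ∀ z : ℂ, AnalyticAt ℂ g z → AnalyticAt ℂ g (z + s) → f z = g (z + s) - g z

/-- The orbital residue of `f` at `β` of order `j`. -/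
def ores (s : ℂ) (f : ℂ → ℂ) (β : ℂ) (j : ℕ) : ℂ :=
  ∑' n : ℤ, laurentCoeff f (β + (n : ℂ) * s) j

end

/-!
For meromorphic `f`, the contour integrals defining `laurentCoeff f α j` are constant for small
radii (Cauchy's theorem on annuli), so Laurent coefficients are additive and commute with
translation. Hence the principal part of `a (· + s) - a` at `x` is that of `a` at `x + s` minus
that of `a` at `x`. Every pole of the difference is therefore a pole of `a` or of `a (· + s)`,
which bounds its polar dispersion by `N + 1`; conversely, by maximality of `N`, no pole of `a`
sits at `p₀ - s` or at `p₀ + (N + 1) s`, so `p₀ - s` and `p₀ + N s` are poles of the difference.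
-/

open Filter Metric Set Topology

section CircleIntegral

variable {E : Type*} [NormedAddCommGroup E] [NormedSpace ℂ E] {h : ℂ → E} {α : ℂ}

theorem exists_pos_differentiableAt_of_eventually_nhdsNE
    (hh : ∀ᶠ z in 𝓝[≠] α, DifferentiableAt ℂ h z) :
    ∃ δ > 0, ∀ z, z ≠ α → dist z α < δ → DifferentiableAt ℂ h z := by
  obtain ⟨δ, hδ, hball⟩ := Metric.eventually_nhds_iff.1 (eventually_nhdsWithin_iff.1 hh)
  exact ⟨δ, hδ, fun z hz hzδ => hball hzδ hz⟩

theorem eventually_circleIntegrable_of_eventually_nhdsNE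
    (hh : ∀ᶠ z in 𝓝[≠] α, DifferentiableAt ℂ h z) :
    ∀ᶠ ε in 𝓝[>] (0 : ℝ), CircleIntegrable h α ε := by
  obtain ⟨δ, hδ, hdiff⟩ := exists_pos_differentiableAt_of_eventually_nhdsNE hh
  filter_upwards [Ioo_mem_nhdsGT hδ] with ε hε
  refine ContinuousOn.circleIntegrable hε.1.le fun z hz => ?_
  exact (hdiff z (ne_of_mem_sphere hz hε.1.ne') (by rw [mem_sphere.1 hz]; exact hε.2))
    |>.continuousAt.continuousWithinAt

/-- Cauchy's theorem on annuli makes the integral over small circles independent of the radius. -/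
theorem exists_eventually_circleIntegral_eq_of_eventually_nhdsNE [CompleteSpace E]
    (hh : ∀ᶠ z in 𝓝[≠] α, DifferentiableAt ℂ h z) :
    ∃ c : E, ∀ᶠ ε in 𝓝[>] (0 : ℝ), (∮ z in C(α, ε), h z) = c := by
  obtain ⟨δ, hδ, hdiff⟩ := exists_pos_differentiableAt_of_eventually_nhdsNE hh
  have hdiff' : ∀ ε > 0, ∀ z ∈ closedBall α (δ / 2) \ ball α ε, DifferentiableAt ℂ h z :=
    fun ε hε z ⟨hzR, hzr⟩ => by
      rw [mem_closedBall] at hzR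
      rw [mem_ball, not_lt] at hzr
      exact hdiff z (fun hz => by simp [hz] at hzr; linarith) (by linarith)
  refine ⟨∮ z in C(α, δ / 2), h z, ?_⟩
  filter_upwards [Ioo_mem_nhdsGT (half_pos hδ)] with ε hε
  refine (circleIntegral_eq_of_differentiable_on_annulus_off_countable hε.1 hε.2.le
    countable_empty (fun z hz => (hdiff' ε hε.1 z hz).continuousAt.continuousWithinAt)
    fun z hz => hdiff' ε hε.1 z ?_).symm
  exact ⟨ball_subset_closedBall hz.1.1, fun h' => hz.1.2 (ball_subset_closedBall h')⟩

theorem circleIntegral_comp_add_const (h : ℂ → E) (c s : ℂ) (R : ℝ) :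
    (∮ z in C(c, R), h (z + s)) = ∮ z in C(c + s, R), h z := by
  simp only [circleIntegral, deriv_circleMap, circleMap, add_right_comm c s]

end CircleIntegral

section LaurentCoeff

variable {f g : ℂ → ℂ} {α : ℂ}

theorem MeromorphicAt.eventually_differentiableAt_mul_sub_pow (hf : MeromorphicAt f α) (k : ℕ) :
    ∀ᶠ z in 𝓝[≠] α, DifferentiableAt ℂ (fun z => f z * (z - α) ^ k) z :=
  hf.eventually_analyticAt.mono fun _ hz => hz.differentiableAt.mul (by fun_prop)

theorem MeromorphicAt.eventually_eq_laurentCoeff (hf : MeromorphicAt f α) (j : ℕ) :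
    ∀ᶠ ε in 𝓝[>] (0 : ℝ), (2 * (Real.pi : ℂ) * I)⁻¹ * (∮ z in C(α, ε), f z * (z - α) ^ (j - 1))
      = laurentCoeff f α j := by
  obtain ⟨c, hc⟩ := exists_eventually_circleIntegral_eq_of_eventually_nhdsNE
    (hf.eventually_differentiableAt_mul_sub_pow (j - 1))
  have hlim : laurentCoeff f α j = (2 * (Real.pi : ℂ) * I)⁻¹ * c :=
    (tendsto_const_nhds.congr' (hc.mono fun ε hε => by rw [hε])).limUnder_eq
  filter_upwards [hc] with ε hε
  rw [hε, hlim]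

theorem laurentCoeff_sub (hf : MeromorphicAt f α) (hg : MeromorphicAt g α) (j : ℕ) :
    laurentCoeff (fun z => f z - g z) α j = laurentCoeff f α j - laurentCoeff g α j := by
  obtain ⟨ε, hfg, hf', hg', hfi, hgi⟩ := ((hf.fun_sub hg).eventually_eq_laurentCoeff j |>.and <|
    hf.eventually_eq_laurentCoeff j |>.and <| hg.eventually_eq_laurentCoeff j |>.and <|
    eventually_circleIntegrable_of_eventually_nhdsNE
      (hf.eventually_differentiableAt_mul_sub_pow (j - 1)) |>.and <|
    eventually_circleIntegrable_of_eventually_nhdsNE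
      (hg.eventually_differentiableAt_mul_sub_pow (j - 1))).exists
  rw [← hfg, ← hf', ← hg', ← mul_sub, ← circleIntegral.integral_sub hfi hgi]
  simp only [sub_mul]

theorem laurentCoeff_comp_add_const (f : ℂ → ℂ) (s α : ℂ) (j : ℕ) :
    laurentCoeff (fun z => f (z + s)) α j = laurentCoeff f (α + s) j := by
  have hpow (z : ℂ) : z - α = z + s - (α + s) := by ring
  simp only [laurentCoeff, hpow,
    circleIntegral_comp_add_const (fun z => f z * (z - (α + s)) ^ (j - 1))]

theorem laurentCoeff_eq_zero_of_not_isPole (hf : MeromorphicAt f α) (hα : ¬IsPole f α) {j : ℕ}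
    (hj : 1 ≤ j) : laurentCoeff f α j = 0 :=
  not_not.1 fun hne => hα ⟨hf, j, hj, hne⟩

end LaurentCoeff

section DifferenceOperator

variable {a : ℂ → ℂ} {s x : ℂ}

theorem laurentCoeff_sub_comp_add_const (hx : MeromorphicAt a x) (hxs : MeromorphicAt a (x + s))
    (j : ℕ) : laurentCoeff (fun z => a (z + s) - a z) x j
      = laurentCoeff a (x + s) j - laurentCoeff a x j := by
  rw [laurentCoeff_sub (meromorphicAt_fun_comp_add_const_iff_meromorphicAt.2 hxs) hx,
    laurentCoeff_comp_add_const]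

theorem isPole_or_isPole_add_of_isPole_sub_comp_add_const (hx : MeromorphicAt a x)
    (hxs : MeromorphicAt a (x + s)) (hpole : IsPole (fun z => a (z + s) - a z) x) :
    IsPole a x ∨ IsPole a (x + s) := by
  by_contra! hnot
  obtain ⟨j, hj, hne⟩ := hpole.2
  rw [laurentCoeff_sub_comp_add_const hx hxs, laurentCoeff_eq_zero_of_not_isPole hx hnot.1 hj,
    laurentCoeff_eq_zero_of_not_isPole hxs hnot.2 hj, sub_zero] at hne
  exact hne rfl

theorem isPole_sub_comp_add_const_of_not_isPole (hx : MeromorphicAt a x) (hxs : IsPole a (x + s))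
    (hnot : ¬IsPole a x) : IsPole (fun z => a (z + s) - a z) x := by
  obtain ⟨j, hj, hne⟩ := hxs.2
  refine ⟨(meromorphicAt_fun_comp_add_const_iff_meromorphicAt.2 hxs.1).sub hx, j, hj, ?_⟩
  rwa [laurentCoeff_sub_comp_add_const hx hxs.1, laurentCoeff_eq_zero_of_not_isPole hx hnot hj,
    sub_zero]

theorem isPole_sub_comp_add_const_of_not_isPole_add (hx : IsPole a x)
    (hxs : MeromorphicAt a (x + s)) (hnot : ¬IsPole a (x + s)) :
    IsPole (fun z => a (z + s) - a z) x := by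
  obtain ⟨j, hj, hne⟩ := hx.2
  refine ⟨(meromorphicAt_fun_comp_add_const_iff_meromorphicAt.2 hxs).sub hx.1, j, hj, ?_⟩
  rwa [laurentCoeff_sub_comp_add_const hx.1 hxs, laurentCoeff_eq_zero_of_not_isPole hxs hnot hj,
    zero_sub, neg_ne_zero]

end DifferenceOperator

theorem not_exists_pair_of_forall_imp_or_add {P Q : ℂ → Prop} {s : ℂ} {N : ℤ}
    (hQP : ∀ x, Q x → P x ∨ P (x + s))
    (hP : ∀ m : ℤ, N < m → ¬∃ p, P p ∧ P (p + m * s)) :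
    ∀ m : ℤ, N + 1 < m → ¬∃ p, Q p ∧ Q (p + m * s) := by
  rintro m hm ⟨p, hp, hpm⟩
  have hshift (x : ℂ) (k : ℤ) : x + ((k + 1 : ℤ) : ℂ) * s = x + k * s + s := by push_cast; ring
  rcases hQP p hp with hp' | hp' <;> rcases hQP _ hpm with hpm' | hpm'
  · exact hP m (by omega) ⟨p, hp', hpm'⟩
  · exact hP (m + 1) (by omega) ⟨p, hp', by rwa [hshift]⟩
  · refine hP (m - 1) (by omega) ⟨p + s, hp', ?_⟩
    rwa [add_right_comm, ← hshift, sub_add_cancel]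
  · exact hP m (by omega) ⟨p + s, hp', by rwa [add_right_comm]⟩

theorem statement2_general (l1 l2 s : ℂ)
    (a : ℂ → ℂ) (ha : IsElliptic (latticeGen l1 l2) a)
    (N : ℕ)
    (hN : ∃ p₀ : ℂ, IsPole a p₀ ∧ IsPole a (p₀ + (N : ℂ) * s))
    (hNmax : ∀ m : ℤ, (N : ℤ) < m → ¬ ∃ p : ℂ, IsPole a p ∧ IsPole a (p + (m : ℂ) * s)) :
    (∃ p : ℂ, IsPole (fun z => a (z + s) - a z) p ∧
        IsPole (fun z => a (z + s) - a z) (p + ((N : ℂ) + 1) * s)) ∧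
    ∀ m : ℤ, (N : ℤ) + 1 < m →
      ¬ ∃ p : ℂ, IsPole (fun z => a (z + s) - a z) p ∧
          IsPole (fun z => a (z + s) - a z) (p + (m : ℂ) * s) := by
  obtain ⟨p₀, hp₀, hpN⟩ := hN
  have hmer : ∀ z, MeromorphicAt a z := ha.1
  have hNs : ((N + 1 : ℤ) : ℂ) * s = N * s + s := by push_cast; ring
  refine ⟨⟨p₀ - s, ?_, ?_⟩, not_exists_pair_of_forall_imp_or_add
    (fun x => isPole_or_isPole_add_of_isPole_sub_comp_add_const (hmer x) (hmer (x + s))) hNmax⟩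
  · refine isPole_sub_comp_add_const_of_not_isPole (hmer _) (by rwa [sub_add_cancel]) fun h => ?_
    refine hNmax (N + 1) (by omega) ⟨p₀ - s, h, ?_⟩
    rwa [hNs, add_comm _ s, ← add_assoc, sub_add_cancel]
  · rw [show p₀ - s + ((N : ℂ) + 1) * s = p₀ + N * s by ring]
    refine isPole_sub_comp_add_const_of_not_isPole_add hpN (hmer _) fun h => ?_
    exact hNmax (N + 1) (by omega) ⟨p₀, hp₀, by rwa [hNs, ← add_assoc]⟩

/-- applying the difference operator increments the polar dispersion. -/
theorem statement2 (l1 l2 s : ℂ) (hl1 : l1 ≠ 0) (hl2 : l2 ≠ 0)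
    (hratio : ∀ r : ℝ, l1 / l2 ≠ (r : ℂ))
    (hs : ∀ a b : ℚ, s ≠ (a : ℂ) * l1 + (b : ℂ) * l2)
    (a : ℂ → ℂ) (ha : IsElliptic (latticeGen l1 l2) a)
    (hnonconst : ∃ z w : ℂ, ¬ IsPole a z ∧ ¬ IsPole a w ∧ a z ≠ a w)
    (hhaspole : ∃ p : ℂ, IsPole a p)
    (N : ℕ)
    (hN : ∃ p₀ : ℂ, IsPole a p₀ ∧ IsPole a (p₀ + (N : ℂ) * s))
    (hNmax : ∀ m : ℤ, (N : ℤ) < m → ¬ ∃ p : ℂ, IsPole a p ∧ IsPole a (p + (m : ℂ) * s)) :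
    (∃ p : ℂ, IsPole (fun z => a (z + s) - a z) p ∧
        IsPole (fun z => a (z + s) - a z) (p + ((N : ℂ) + 1) * s)) ∧
    ∀ m : ℤ, (N : ℤ) + 1 < m →
      ¬ ∃ p : ℂ, IsPole (fun z => a (z + s) - a z) p ∧
          IsPole (fun z => a (z + s) - a z) (p + (m : ℂ) * s) :=
  statement2_general l1 l2 s a ha N hN hNmax
end

section
/- Let f ∈ ℂ(x) be a rational function, viewed as a meromorphic function on ℂ. Then there exists a rational function g ∈ ℂ(x) with g(x + 1) − g(x) = f(x) (as rational functions) if and only if for every β ∈ ℂ and every integer j ≥ 1 the discrete residue dres(f, β, j) = ∑_{n ∈ ℤ} c_j(f, β + n) equals 0, where the sum has only finitely many nonzero terms. -/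
/-!
Over `ℂ` every rational function is a polynomial plus a finite combination
`∑ c(γ, k) (X - γ)^-(k+1)` of pole terms, and the residue computation
`∮ (z - α)^n dz = 2πi [n = -1]` identifies `c(α, k)` with the Laurent coefficient `c_{k+1}(f, α)`;
so the discrete residue at `(β, k+1)` is the sum of `c(γ, k)` over the orbit `γ ∈ β + ℤ`,
and the coefficients are determined by `f`.

The difference operator `Δ g = g(X+1) - g` maps onto the polynomials (through Bernoulli
polynomials) and sends `(X - γ)^-(k+1)` to `(X - γ + 1)^-(k+1) - (X - γ)^-(k+1)`. Hence pole
terms of the same order whose poles lie in one `ℤ`-orbit agree modulo the image of `Δ`, and `f`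
is a difference as soon as all orbit sums vanish. Conversely, the coefficients of `Δ g` are
`c(γ + 1, k) - c(γ, k)`, whose orbit sums telescope to zero.
-/

open Polynomial Filter

noncomputable section

theorem Polynomial.exists_taylor_one_sub_eq {K : Type*} [Field K] [CharZero K] (p : K[X]) :
    ∃ q, taylor 1 q - q = p := by
  induction p using Polynomial.induction_on' with
  | add p q hp hq =>
    obtain ⟨p', rfl⟩ := hp
    obtain ⟨q', rfl⟩ := hq
    exact ⟨p' + q', by rw [map_add]; ring⟩
  | monomial n a =>
    -- `B (X + 1) - B X = (n + 1) X ^ n` for the Bernoulli polynomial `B` of degree `n + 1`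
    set B := (bernoulli (n + 1)).map (algebraMap ℚ K)
    have hB : taylor 1 B - B = ((n : K) + 1) • X ^ n := by
      have := congrArg (map (algebraMap ℚ K)) (bernoulli_comp_one_add_X (n + 1))
      simp only [Polynomial.map_comp, Polynomial.map_add, Polynomial.map_one, Polynomial.map_X]
        at this
      rw [taylor_apply, map_one, add_comm X, this, add_sub_cancel_left]
      simp [nsmul_eq_mul, smul_eq_C_mul]
    refine ⟨C (a / (n + 1)) * B, ?_⟩
    have hn : (n : K) + 1 ≠ 0 := by exact_mod_cast n.succ_ne_zero
    rw [taylor_mul, taylor_C, ← mul_sub, hB, smul_eq_C_mul, ← mul_assoc, ← C_mul,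
      div_mul_cancel₀ _ hn, C_mul_X_pow_eq_monomial]

namespace RatFunc

variable {K : Type*} [Field K]

variable (K) in
def fwdDiff : RatFunc K →ₗ[K] RatFunc K := (laurent (1 : K)).toLinearMap - LinearMap.id

theorem fwdDiff_apply (f : RatFunc K) : fwdDiff K f = laurent 1 f - f := rfl

theorem eval_X_add_C (r : K) (f : RatFunc K) :
    eval (algebraMap K (RatFunc K)) (X + C r) f = laurent r f := by
  have key (q : K[X]) : q.eval₂ (algebraMap K (RatFunc K)) (X + C r) =
      algebraMap K[X] (RatFunc K) (taylor r q) := by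
    rw [← aeval_def, ← algebraMap_X, ← algebraMap_C, ← map_add, aeval_algebraMap_apply,
      taylor_apply, comp_eq_aeval]
  rw [eval, key, key, ← laurent_div, num_div_denom]

theorem X_sub_C_ne_zero (γ : K) : (X - C γ : RatFunc K) ≠ 0 := by
  rw [← algebraMap_X, ← algebraMap_C, ← map_sub]
  exact algebraMap_ne_zero (Polynomial.X_sub_C_ne_zero γ)

def poleTerm (γ : K) (k : ℕ) : RatFunc K := ((X - C γ) ^ (k + 1))⁻¹

theorem laurent_poleTerm (r γ : K) (k : ℕ) : laurent r (poleTerm γ k) = poleTerm (γ - r) k := by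
  rw [poleTerm, poleTerm, map_inv₀, map_pow, map_sub, laurent_X, laurent_C, map_sub]
  ring

def partialFraction : K[X] × (K × ℕ →₀ K) →ₗ[K] RatFunc K :=
  (IsScalarTower.toAlgHom K K[X] (RatFunc K)).toLinearMap.coprod
    (Finsupp.linearCombination K fun x => poleTerm x.1 x.2)

theorem partialFraction_apply (p : K[X]) (c : K × ℕ →₀ K) :
    partialFraction (p, c) =
      algebraMap K[X] (RatFunc K) p + c.sum fun x a => a • poleTerm x.1 x.2 := by
  simp [partialFraction, Finsupp.linearCombination_apply]

theorem poleTerm_mem_range_partialFraction (γ : K) (k : ℕ) :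
    poleTerm γ k ∈ LinearMap.range partialFraction :=
  ⟨(0, Finsupp.single (γ, k) 1), by simp [partialFraction_apply]⟩

theorem algebraMap_mem_range_partialFraction (p : K[X]) :
    algebraMap K[X] (RatFunc K) p ∈ LinearMap.range partialFraction :=
  ⟨(p, 0), by simp [partialFraction_apply]⟩

theorem inv_X_sub_C_mul_algebraMap_mem_range_partialFraction (γ : K) (p : K[X]) :
    (X - C γ)⁻¹ * algebraMap K[X] (RatFunc K) p ∈ LinearMap.range partialFraction := by
  set q := p /ₘ (Polynomial.X - Polynomial.C γ)
  have hp : p = (Polynomial.X - Polynomial.C γ) * q + Polynomial.C (p.eval γ) := by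
    rw [← modByMonic_X_sub_C_eq_C_eval, add_comm, modByMonic_add_div]
  have : (X - C γ)⁻¹ * algebraMap K[X] (RatFunc K) p =
      algebraMap K[X] (RatFunc K) q + p.eval γ • poleTerm γ 0 := by
    conv_lhs => rw [hp]
    simp only [map_add, map_mul, map_sub, algebraMap_X, algebraMap_C, poleTerm, zero_add,
      pow_one, Algebra.smul_def, algebraMap_eq_C]
    field_simp [X_sub_C_ne_zero γ]
  rw [this]
  exact add_mem (algebraMap_mem_range_partialFraction q)
    (Submodule.smul_mem _ _ (poleTerm_mem_range_partialFraction γ 0))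

theorem inv_X_sub_C_mul_poleTerm_mem_range_partialFraction (γ δ : K) (k : ℕ) :
    (X - C γ)⁻¹ * poleTerm δ k ∈ LinearMap.range partialFraction := by
  rcases eq_or_ne γ δ with rfl | hγδ
  · convert poleTerm_mem_range_partialFraction γ (k + 1) using 1
    rw [poleTerm, poleTerm, pow_succ' _ (k + 1), mul_inv]
  have key : (X - C γ)⁻¹ * (X - C δ)⁻¹ = C (γ - δ)⁻¹ * ((X - C γ)⁻¹ - (X - C δ)⁻¹) := by
    have : C (γ - δ) ≠ (0 : RatFunc K) := (_root_.map_ne_zero _).2 (sub_ne_zero.2 hγδ)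
    rw [map_inv₀]
    field_simp [X_sub_C_ne_zero γ, X_sub_C_ne_zero δ]
    simp only [map_sub]
    ring
  suffices ∀ m : ℕ, (X - C γ)⁻¹ * ((X - C δ)⁻¹) ^ m ∈ LinearMap.range partialFraction by
    simpa [poleTerm, inv_pow] using this (k + 1)
  intro m
  induction m with
  | zero => simpa [poleTerm] using poleTerm_mem_range_partialFraction γ 0
  | succ m ih =>
    have : (X - C γ)⁻¹ * ((X - C δ)⁻¹) ^ (m + 1) =
        (γ - δ)⁻¹ • ((X - C γ)⁻¹ * ((X - C δ)⁻¹) ^ m - poleTerm δ m) := by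
      rw [pow_succ', ← mul_assoc, key, poleTerm, ← inv_pow, Algebra.smul_def, algebraMap_eq_C]
      ring
    rw [this]
    exact Submodule.smul_mem _ _ (sub_mem ih (poleTerm_mem_range_partialFraction δ m))

theorem inv_X_sub_C_mul_mem_range_partialFraction (γ : K) {f : RatFunc K}
    (hf : f ∈ LinearMap.range partialFraction) :
    (X - C γ)⁻¹ * f ∈ LinearMap.range partialFraction := by
  obtain ⟨⟨p, c⟩, rfl⟩ := hf
  rw [partialFraction_apply, mul_add, Finsupp.mul_sum]
  refine add_mem (inv_X_sub_C_mul_algebraMap_mem_range_partialFraction γ p)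
    (Submodule.finsuppSum_mem _ _ _ _ fun x _ => ?_)
  rw [mul_smul_comm]
  exact Submodule.smul_mem _ _ (inv_X_sub_C_mul_poleTerm_mem_range_partialFraction γ x.1 x.2)

theorem partialFraction_surjective [IsAlgClosed K] :
    Function.Surjective (partialFraction (K := K)) := by
  intro f
  suffices ∀ (s : Multiset K) (p : K[X]),
      (s.map fun a => (X - C a)⁻¹).prod * algebraMap K[X] (RatFunc K) p ∈
        LinearMap.range partialFraction by
    have hdenom := prod_multiset_X_sub_C_of_monic_of_roots_card_eq (monic_denom f)
      IsAlgClosed.card_roots_eq_natDegree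
    obtain ⟨x, hx⟩ := this (denom f).roots (num f)
    refine ⟨x, hx.trans ?_⟩
    conv_rhs => rw [← num_div_denom f, ← hdenom]
    simp [map_multiset_prod, Multiset.prod_map_inv, div_eq_inv_mul, Function.comp_def]
  intro s p
  induction s using Multiset.induction_on with
  | empty => simpa using algebraMap_mem_range_partialFraction p
  | cons a s ih =>
    rw [Multiset.map_cons, Multiset.prod_cons, mul_assoc]
    exact inv_X_sub_C_mul_mem_range_partialFraction a ih

theorem fwdDiff_partialFraction (p : K[X]) (c : K × ℕ →₀ K) :
    fwdDiff K (partialFraction (p, c)) =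
      partialFraction (taylor 1 p - p, c.mapDomain (Prod.map (· - 1) id) - c) := by
  have : laurent 1 (partialFraction (p, c)) =
      partialFraction (taylor 1 p, c.mapDomain (Prod.map (· - 1) id)) := by
    simp only [partialFraction, LinearMap.coprod_apply, Finsupp.linearCombination_mapDomain]
    simp [Finsupp.linearCombination_apply, map_finsuppSum, laurent_poleTerm]
  rw [fwdDiff_apply, this, ← map_sub, Prod.mk_sub_mk]

theorem algebraMap_mem_range_fwdDiff [CharZero K] (p : K[X]) :
    algebraMap K[X] (RatFunc K) p ∈ LinearMap.range (fwdDiff K) := by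
  obtain ⟨q, rfl⟩ := exists_taylor_one_sub_eq p
  exact ⟨algebraMap K[X] (RatFunc K) q, by rw [fwdDiff_apply, laurent_algebraMap, map_sub]⟩

theorem poleTerm_sub_mem_range_fwdDiff {γ δ : K}
    (h : (γ : K ⧸ AddSubgroup.zmultiples (1 : K)) = δ) (k : ℕ) :
    poleTerm γ k - poleTerm δ k ∈ LinearMap.range (fwdDiff K) := by
  let H : AddSubgroup K :=
    { carrier := {w | ∀ γ, poleTerm (γ + w) k - poleTerm γ k ∈ LinearMap.range (fwdDiff K)}
      zero_mem' := fun γ => by simp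
      add_mem' := fun {a b} ha hb γ => by
        simpa [← add_assoc] using add_mem (hb (γ + a)) (ha γ)
      neg_mem' := fun {a} ha γ => by simpa using neg_mem (ha (γ + -a)) }
  have h1 : (1 : K) ∈ H := fun γ => ⟨-poleTerm (γ + 1) k, by
    rw [map_neg, fwdDiff_apply, laurent_poleTerm, add_sub_cancel_right, neg_sub]⟩
  obtain ⟨n, hn⟩ := QuotientAddGroup.eq.1 h.symm
  simpa using AddSubgroup.zmultiples_le_of_mem h1 ⟨n, hn⟩ δ

def poleClass : K × ℕ → (K ⧸ AddSubgroup.zmultiples (1 : K)) × ℕ := Prod.map (↑) id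

theorem poleClass_eq_iff {x y : K × ℕ} :
    poleClass x = poleClass y ↔ ∃ n : ℤ, x = (y.1 + n, y.2) := by
  simp only [poleClass, Prod.map, id, Prod.ext_iff, QuotientAddGroup.eq_iff_sub_mem,
    AddSubgroup.mem_zmultiples_iff, zsmul_one, eq_sub_iff_add_eq', eq_comm (a := x.1),
    exists_and_right]

theorem poleClass_comp_sub_one : poleClass ∘ Prod.map (· - 1) id = poleClass (K := K) := by
  ext x <;> simp [poleClass]

theorem partialFraction_mem_range_fwdDiff [CharZero K] (p : K[X]) {c : K × ℕ →₀ K}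
    (hc : c.mapDomain poleClass = 0) : partialFraction (p, c) ∈ LinearMap.range (fwdDiff K) := by
  -- move every pole to the chosen representative of its orbit; the moved coefficients cancel
  set rep : K × ℕ → K × ℕ := Prod.map Quotient.out id ∘ poleClass
  have hrep : (c.sum fun x a => a • poleTerm (rep x).1 (rep x).2) = 0 := by
    rw [← Finsupp.sum_mapDomain_index (h := fun (y : K × ℕ) (a : K) => a • poleTerm y.1 y.2)
      (by simp) (by simp [add_smul]), Finsupp.mapDomain_comp, hc]
    simp
  have : partialFraction (p, c) = algebraMap K[X] (RatFunc K) p +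
      c.sum fun x a => a • (poleTerm x.1 x.2 - poleTerm (rep x).1 (rep x).2) := by
    simp only [partialFraction_apply, smul_sub, Finsupp.sum_sub, hrep, sub_zero]
  rw [this]
  refine add_mem (algebraMap_mem_range_fwdDiff p) (Submodule.finsuppSum_mem _ _ _ _ fun x _ => ?_)
  exact Submodule.smul_mem _ _ (poleTerm_sub_mem_range_fwdDiff (Quotient.out_eq _).symm x.2)

theorem eventually_eval₂_denom_ne_zero (f : RatFunc K) :
    ∀ᶠ z in cofinite, (denom f).eval₂ (RingHom.id K) z ≠ 0 :=
  eventually_cofinite.2 <| by simpa using finite_setOfPred_isRoot (denom_ne_zero f)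

theorem eventually_eval_add (f g : RatFunc K) :
    ∀ᶠ z in cofinite, eval (RingHom.id K) z (f + g) =
      eval (RingHom.id K) z f + eval (RingHom.id K) z g := by
  filter_upwards [eventually_eval₂_denom_ne_zero f, eventually_eval₂_denom_ne_zero g]
    with z hf hg using eval_add _ _ hf hg

theorem eventually_eval_mul (f g : RatFunc K) :
    ∀ᶠ z in cofinite, eval (RingHom.id K) z (f * g) =
      eval (RingHom.id K) z f * eval (RingHom.id K) z g := by
  filter_upwards [eventually_eval₂_denom_ne_zero f, eventually_eval₂_denom_ne_zero g]
    with z hf hg using eval_mul _ _ hf hg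

theorem eventually_eval_inv (f : RatFunc K) :
    ∀ᶠ z in cofinite, eval (RingHom.id K) z f⁻¹ = (eval (RingHom.id K) z f)⁻¹ := by
  rcases eq_or_ne f 0 with rfl | hf
  · simp
  filter_upwards [eventually_eval_mul f f⁻¹] with z hz
  rw [mul_inv_cancel₀ hf, eval_one] at hz
  exact eq_inv_of_mul_eq_one_right hz.symm

theorem eventually_eval_sum {ι : Type*} (s : Finset ι) (f : ι → RatFunc K) :
    ∀ᶠ z in cofinite, eval (RingHom.id K) z (∑ i ∈ s, f i) =
      ∑ i ∈ s, eval (RingHom.id K) z (f i) := by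
  classical
  induction s using Finset.induction_on with
  | empty => simp
  | insert i s hi ih =>
    filter_upwards [ih, eventually_eval_add (f i) (∑ j ∈ s, f j)] with z h1 h2
    rw [Finset.sum_insert hi, Finset.sum_insert hi, h2, h1]

theorem eventually_eval_smul_poleTerm (a γ : K) (k : ℕ) :
    ∀ᶠ z in cofinite, eval (RingHom.id K) z (a • poleTerm γ k) = a * ((z - γ) ^ (k + 1))⁻¹ := by
  set d := (Polynomial.X - Polynomial.C γ) ^ (k + 1)
  have hd : poleTerm γ k = (algebraMap K[X] (RatFunc K) d)⁻¹ := by simp [poleTerm, d]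
  filter_upwards [eventually_eval_mul (C a) (poleTerm γ k),
    eventually_eval_inv (algebraMap K[X] (RatFunc K) d)] with z h_mul h_inv
  rw [Algebra.smul_def, algebraMap_eq_C, h_mul, hd, h_inv, eval_C, eval_algebraMap]
  simp [d]

theorem eventually_eval_partialFraction (p : K[X]) (c : K × ℕ →₀ K) :
    ∀ᶠ z in cofinite, eval (RingHom.id K) z (partialFraction (p, c)) =
      p.eval z + c.sum fun x a => a * ((z - x.1) ^ (x.2 + 1))⁻¹ := by
  filter_upwards [eventually_eval_add (algebraMap K[X] (RatFunc K) p) _,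
    eventually_eval_sum c.support _,
    c.support.eventually_all.2 fun x _ => eventually_eval_smul_poleTerm (c x) x.1 x.2]
    with z h_add h_sum h_terms
  rw [partialFraction_apply, h_add, eval_algebraMap, Finsupp.sum, h_sum,
    Finset.sum_congr rfl h_terms]
  rfl

end RatFunc

end

open Complex Metric Real Topology RatFunc

theorem laurentCoeff_congr {F G : ℂ → ℂ} (h : F =ᶠ[cofinite] G) (α : ℂ) (j : ℕ) :
    laurentCoeff F α j = laurentCoeff G α j := by
  unfold laurentCoeff
  congr 1
  funext ε
  rcases eq_or_ne ε 0 with rfl | hε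
  · simp
  congr 1
  refine circleIntegral.circleIntegral_congr_codiscreteWithin ?_ hε
  exact codiscreteWithin_mono (Set.subset_univ _)
    (codiscrete_le_cofinite (h.mul (EventuallyEq.refl _ fun z => (z - α) ^ (j - 1))))

theorem circleIntegral_inv_sub_pow_mul_sub_pow {α γ : ℂ} {ε : ℝ} (hε : 0 < ε)
    (hγ : γ = α ∨ γ ∉ closedBall α ε) (m k : ℕ) :
    (∮ z in C(α, ε), ((z - γ) ^ (m + 1))⁻¹ * (z - α) ^ k) =
      if γ = α ∧ m = k then 2 * π * I else 0 := by
  rcases hγ with rfl | hγ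
  · have : Set.EqOn (fun z => ((z - γ) ^ (m + 1))⁻¹ * (z - γ) ^ k)
        (fun z => (z - γ) ^ ((k : ℤ) - (m + 1))) (sphere γ ε) := fun z hz => by
      have : z - γ ≠ 0 := sub_ne_zero.2 (ne_of_mem_sphere hz hε.ne')
      simp only [zpow_sub₀ this, div_eq_inv_mul, zpow_natCast, ← Nat.cast_succ]
    rw [circleIntegral.integral_congr hε.le this]
    by_cases hmk : m = k
    · subst hmk
      simpa using circleIntegral.integral_sub_inv_of_mem_ball (mem_ball_self hε)
    · rw [circleIntegral.integral_sub_zpow_of_ne (by omega), if_neg (by tauto)]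
  · rw [if_neg (by rintro ⟨rfl, -⟩; exact hγ (mem_closedBall_self hε.le))]
    refine DiffContOnCl.circleIntegral_eq_zero hε.le (DifferentiableOn.diffContOnCl ?_)
    rw [closure_ball α hε.ne']
    intro z hz
    have : z - γ ≠ 0 := sub_ne_zero.2 (by rintro rfl; exact hγ hz)
    fun_prop (disch := simp [this])

theorem eventually_forall_eq_or_notMem_closedBall (s : Finset ℂ) (α : ℂ) :
    ∀ᶠ ε in 𝓝[>] (0 : ℝ), ∀ γ ∈ s, γ = α ∨ γ ∉ closedBall α ε := by
  refine s.eventually_all.2 fun γ _ => ?_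
  rcases eq_or_ne γ α with h | h
  · exact .of_forall fun _ => .inl h
  · filter_upwards [Ioo_mem_nhdsGT (dist_pos.2 h)] with ε hε
    exact .inr fun hγ => (mem_closedBall.1 hγ).not_gt hε.2

theorem laurentCoeff_partialFraction (p : ℂ[X]) (c : ℂ × ℕ →₀ ℂ) (α : ℂ) (k : ℕ) :
    laurentCoeff (fun z => eval (RingHom.id ℂ) z (partialFraction (p, c))) α (k + 1) =
      c (α, k) := by
  rw [laurentCoeff_congr (eventually_eval_partialFraction p c)]
  refine (tendsto_const_nhds.congr' ?_).limUnder_eq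
  filter_upwards [self_mem_nhdsWithin,
    eventually_forall_eq_or_notMem_closedBall (c.support.image Prod.fst) α] with ε hε hpoles
  rw [Set.mem_Ioi] at hε
  have hpole (x) (hx : x ∈ c.support) : x.1 = α ∨ x.1 ∉ closedBall α ε :=
    hpoles x.1 (Finset.mem_image_of_mem _ hx)
  have hterm : ∀ x ∈ c.support,
      CircleIntegrable (fun z => c x * (((z - x.1) ^ (x.2 + 1))⁻¹ * (z - α) ^ k)) α ε := by
    intro x hx
    refine ContinuousOn.circleIntegrable hε.le fun z hz => ?_
    have : z - x.1 ≠ 0 := by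
      rw [sub_ne_zero]
      rintro rfl
      rcases hpole x hx with h | h
      · exact ne_of_mem_sphere hz hε.ne' h
      · exact h (sphere_subset_closedBall hz)
    fun_prop (disch := simp [this])
  have hpoly : (∮ z in C(α, ε), p.eval z * (z - α) ^ k) = 0 :=
    DiffContOnCl.circleIntegral_eq_zero hε.le (Differentiable.diffContOnCl (by fun_prop))
  symm
  simp only [add_tsub_cancel_right, add_mul, Finsupp.sum, Finset.sum_mul, mul_assoc]
  rw [circleIntegral.integral_add (by fun_prop) (CircleIntegrable.fun_sum _ hterm), hpoly,
    circleIntegral.integral_fun_sum hterm, zero_add, Finset.sum_eq_single (α, k)]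
  · rw [circleIntegral.integral_const_mul, circleIntegral_inv_sub_pow_mul_sub_pow hε (.inl rfl),
      if_pos ⟨rfl, rfl⟩]
    field_simp
  · intro x hx hne
    rw [circleIntegral.integral_const_mul, circleIntegral_inv_sub_pow_mul_sub_pow hε (hpole x hx),
      if_neg fun h => hne (Prod.ext h.1 h.2), mul_zero]
  · intro h
    rw [circleIntegral.integral_const_mul, Finsupp.notMem_support_iff.1 h, zero_mul]

theorem snd_eq_of_partialFraction_eq {p p' : ℂ[X]} {c c' : ℂ × ℕ →₀ ℂ}
    (h : partialFraction (p, c) = partialFraction (p', c')) : c = c' :=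
  Finsupp.ext fun ⟨α, k⟩ => by
    simpa only [laurentCoeff_partialFraction] using
      congrArg (fun f => laurentCoeff (fun z => eval (RingHom.id ℂ) z f) α (k + 1)) h

theorem tsum_laurentCoeff_partialFraction (p : ℂ[X]) (c : ℂ × ℕ →₀ ℂ) (β : ℂ) (k : ℕ) :
    ∑' n : ℤ, laurentCoeff (fun z => eval (RingHom.id ℂ) z (partialFraction (p, c)))
      (β + n) (k + 1) = c.mapDomain poleClass ((β : ℂ ⧸ AddSubgroup.zmultiples (1 : ℂ)), k) := by
  classical
  simp_rw [laurentCoeff_partialFraction]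
  set e : ℤ → ℂ × ℕ := fun n => (β + n, k)
  have he : Function.Injective e := fun m n h => by simpa [e] using h
  have hfiber (x) : poleClass x = poleClass (β, k) ↔ x ∈ Set.range e := by
    simp [poleClass_eq_iff, e, eq_comm]
  change ∑' n, c (e n) = c.mapDomain poleClass (poleClass (β, k))
  rw [Finsupp.mapDomain_apply_eq_sum, ← Finset.sum_preimage e _ he.injOn c
    fun x hx hxe => absurd ((hfiber x).1 (Finset.mem_filter.1 hx).2) hxe]
  exact tsum_eq_sum fun n hn => by simpa [hfiber] using hn

theorem partialFraction_mem_range_fwdDiff_iff (p : ℂ[X]) (c : ℂ × ℕ →₀ ℂ) :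
    partialFraction (p, c) ∈ LinearMap.range (fwdDiff ℂ) ↔ c.mapDomain poleClass = 0 := by
  refine ⟨fun ⟨g, hg⟩ => ?_, partialFraction_mem_range_fwdDiff p⟩
  obtain ⟨⟨q, d⟩, rfl⟩ := partialFraction_surjective g
  rw [fwdDiff_partialFraction] at hg
  rw [← snd_eq_of_partialFraction_eq hg, Finsupp.mapDomain_sub, ← Finsupp.mapDomain_comp,
    poleClass_comp_sub_one, sub_self]

/-- a rational function `f` is a difference `g(x+1) − g(x)` of rational
functions iff all of its discrete residues vanish. -/
theorem statement13 (f : RatFunc ℂ) :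
    (∃ g : RatFunc ℂ,
      RatFunc.eval (algebraMap ℂ (RatFunc ℂ)) (RatFunc.X + 1) g - g = f) ↔
    ∀ β : ℂ, ∀ j : ℕ, 1 ≤ j →
      (∑' n : ℤ, laurentCoeff (fun z => RatFunc.eval (RingHom.id ℂ) z f)
        (β + (n : ℂ)) j) = 0 := by
  obtain ⟨⟨p, c⟩, rfl⟩ := partialFraction_surjective f
  have hshift (g : RatFunc ℂ) :
      eval (algebraMap ℂ (RatFunc ℂ)) (RatFunc.X + 1) g - g = fwdDiff ℂ g := by
    rw [← map_one RatFunc.C, eval_X_add_C, fwdDiff_apply]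
  simp_rw [hshift, ← LinearMap.mem_range, partialFraction_mem_range_fwdDiff_iff]
  constructor
  · rintro h β j hj
    obtain ⟨k, rfl⟩ := Nat.exists_eq_add_of_le' hj
    rw [tsum_laurentCoeff_partialFraction, h, Finsupp.zero_apply]
  · intro h
    ext ⟨ω, k⟩
    induction ω using QuotientAddGroup.induction_on with
    | H β =>
      rw [Finsupp.zero_apply, ← tsum_laurentCoeff_partialFraction p c β k]
      exact h β (k + 1) k.succ_pos
end
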